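/- arXiv:1712.00837 — 7 statements merged into one kernel-verified Lean document; each statement's English description precedes it below -/
import Mathlib

section
/- If P is a Puiseux monoid such that 0 is not a limit point of P (i.e., inf of the nonzero elements of P is positive), then P is atomic. -/
/-- A Puiseux monoid: an additive submonoid of ℚ consisting of nonnegative rationals. -/
def PM.Puiseux (P : AddSubmonoid ℚ) : Prop := ∀ x ∈ P, 0 ≤ x

/-- `a` is an atom of `P`. -/
def PM.IsAtom (P : AddSubmonoid ℚ) (a : ℚ) : Prop :=
  a ∈ P ∧ a ≠ 0 ∧ ∀ x ∈ P, ∀ y ∈ P, a = x + y → x = 0 ∨ y = 0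

/-- A factorization of `x` is a multiset of atoms of `P` summing to `x`. -/
def PM.IsFactorization (P : AddSubmonoid ℚ) (x : ℚ) (z : Multiset ℚ) : Prop :=
  (∀ a ∈ z, PM.IsAtom P a) ∧ z.sum = x

/-- The set of lengths of `x`. -/
def PM.Lengths (P : AddSubmonoid ℚ) (x : ℚ) : Set ℕ :=
  {n | ∃ z : Multiset ℚ, PM.IsFactorization P x z ∧ Multiset.card z = n}

/-- `P` is atomic: it is generated by its set of atoms. -/
def PM.Atomic (P : AddSubmonoid ℚ) : Prop :=
  AddSubmonoid.closure {a | PM.IsAtom P a} = P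

/-- The union of sets of lengths `U_k(P)`. -/
def PM.U (P : AddSubmonoid ℚ) (k : ℕ) : Set ℕ :=
  {l | ∃ x ∈ P, k ∈ PM.Lengths P x ∧ l ∈ PM.Lengths P x}

/-!
Every nonzero element of `P` is at least `q > 0`, so a nonzero non-atom `x` splits as `y + z` with
`y, z ≤ x - q`. Splitting repeatedly therefore stops after at most `x / q` rounds, and the pieces
left over are atoms.
-/

namespace PM

theorem exists_add_eq_of_not_isAtom {P : AddSubmonoid ℚ} {x : ℚ} (hx : x ∈ P) (hx0 : x ≠ 0)
    (hat : ¬IsAtom P x) : ∃ y ∈ P, ∃ z ∈ P, y ≠ 0 ∧ z ≠ 0 ∧ x = y + z := by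
  simp only [IsAtom, not_and, not_forall, not_or] at hat
  obtain ⟨y, hy, z, hz, hsum, hy0, hz0⟩ := hat hx hx0
  exact ⟨y, hy, z, hz, hy0, hz0, hsum⟩

section Gap

variable {P : AddSubmonoid ℚ} {q : ℚ} (hq : 0 < q) (hgap : ∀ x ∈ P, x ≠ 0 → q ≤ x)
include hq hgap

theorem mem_closure_atoms_of_le_nat_mul (n : ℕ) :
    ∀ x ∈ P, x ≤ n * q → x ∈ AddSubmonoid.closure {a | IsAtom P a} := by
  induction n with
  | zero =>
    intro x hx hle
    obtain rfl : x = 0 := by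
      by_contra hx0
      have := hgap x hx hx0
      rw [Nat.cast_zero, zero_mul] at hle
      linarith
    exact zero_mem _
  | succ n ih =>
    intro x hx hle
    by_cases hx0 : x = 0
    · exact hx0 ▸ zero_mem _
    by_cases hat : IsAtom P x
    · exact AddSubmonoid.subset_closure hat
    obtain ⟨y, hy, z, hz, hy0, hz0, rfl⟩ := exists_add_eq_of_not_isAtom hx hx0 hat
    have hqy := hgap y hy hy0
    have hqz := hgap z hz hz0
    push_cast at hle
    exact add_mem (ih y hy (by linarith)) (ih z hz (by linarith))

end Gap

end PM

theorem stmt2_general (P : AddSubmonoid ℚ)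
    (h0 : ∃ q : ℚ, 0 < q ∧ ∀ x ∈ P, x ≠ 0 → q ≤ x) :
    PM.Atomic P := by
  obtain ⟨q, hq, hgap⟩ := h0
  refine le_antisymm (AddSubmonoid.closure_le.mpr fun a ha => ha.1) fun x hx => ?_
  obtain ⟨n, hn⟩ := exists_nat_ge (x / q)
  exact PM.mem_closure_atoms_of_le_nat_mul hq hgap n x hx (by rwa [div_le_iff₀ hq] at hn)

theorem stmt2 (P : AddSubmonoid ℚ) (hP : PM.Puiseux P)
    (h0 : ∃ q : ℚ, 0 < q ∧ ∀ x ∈ P, x ≠ 0 → q ≤ x) :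
    PM.Atomic P :=
  stmt2_general P h0
end

section
/- Let P be an atomic Puiseux monoid. If P contains a stable atom, i.e., an atom a₀ such that infinitely many atoms a of P satisfy n(a) = n(a₀) (equal numerators in lowest terms), then there exists d ∈ ℕ such that for all k ≥ d, the union of sets of lengths U_k(P) is infinite, hence the k-th local elasticity ρ_k(P) = sup U_k(P) is infinite. -/
theorem Rat.den_nsmul_self (q : ℚ) : q.den • q = q.num := by
  rw [nsmul_eq_mul, Rat.den_mul_eq_num]

theorem Rat.injOn_den_setOf_num_eq (n : ℤ) : Set.InjOn Rat.den {q : ℚ | q.num = n} :=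
  fun _ hp _ hq hden => Rat.ext (hp.trans hq.symm) hden

namespace PM

variable {P : AddSubmonoid ℚ}

theorem IsFactorization.add {x y : ℚ} {z w : Multiset ℚ} (hz : IsFactorization P x z)
    (hw : IsFactorization P y w) : IsFactorization P (x + y) (z + w) := by
  refine ⟨fun a ha => ?_, by rw [Multiset.sum_add, hz.2, hw.2]⟩
  rcases Multiset.mem_add.1 ha with ha | ha
  exacts [hz.1 a ha, hw.1 a ha]

theorem isFactorization_replicate {a : ℚ} (ha : IsAtom P a) (n : ℕ) :
    IsFactorization P (n • a) (Multiset.replicate n a) :=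
  ⟨fun _ hb => Multiset.eq_of_mem_replicate hb ▸ ha, Multiset.sum_replicate n a⟩

theorem IsFactorization.mem {x : ℚ} {z : Multiset ℚ} (hz : IsFactorization P x z) : x ∈ P :=
  hz.2 ▸ AddSubmonoid.multiset_sum_mem P z fun a ha => (hz.1 a ha).1

theorem lengths_subset_U {x : ℚ} {k : ℕ} (hk : k ∈ Lengths P x) : Lengths P x ⊆ U P k :=
  fun _ hl => ⟨x, hk.elim fun _ hz => hz.1.mem, hk, hl⟩

theorem den_add_mem_lengths_of_num_eq {a₀ b : ℚ} (ha₀ : IsAtom P a₀) (hb : IsAtom P b)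
    (hnum : b.num = a₀.num) (m : ℕ) :
    b.den + m ∈ Lengths P ((a₀.den + m) • a₀) := by
  refine ⟨Multiset.replicate b.den b + Multiset.replicate m a₀, ?_, by simp⟩
  rw [add_nsmul, Rat.den_nsmul_self, ← hnum, ← Rat.den_nsmul_self]
  exact (isFactorization_replicate hb _).add (isFactorization_replicate ha₀ _)

end PM

theorem stmt3_general (P : AddSubmonoid ℚ)
    (a₀ : ℚ) (ha₀ : PM.IsAtom P a₀)
    (hstable : {a : ℚ | PM.IsAtom P a ∧ a.num = a₀.num}.Infinite) :
    ∃ d : ℕ, ∀ k ≥ d, (PM.U P k).Infinite := by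
  refine ⟨a₀.den, fun k hk => ?_⟩
  obtain ⟨m, rfl⟩ := Nat.exists_eq_add_of_le hk
  have hlen : a₀.den + m ∈ PM.Lengths P ((a₀.den + m) • a₀) :=
    ⟨_, PM.isFactorization_replicate ha₀ _, Multiset.card_replicate _ _⟩
  have hsub : (fun b : ℚ => b.den + m) '' {a | PM.IsAtom P a ∧ a.num = a₀.num} ⊆
      PM.U P (a₀.den + m) := by
    rintro _ ⟨b, ⟨hb, hnum⟩, rfl⟩
    exact PM.lengths_subset_U hlen (PM.den_add_mem_lengths_of_num_eq ha₀ hb hnum m)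
  refine (hstable.image ?_).mono hsub
  exact (add_left_injective m).comp_injOn
    ((Rat.injOn_den_setOf_num_eq a₀.num).mono fun _ hb => hb.2)

theorem stmt3 (P : AddSubmonoid ℚ) (hP : PM.Puiseux P) (hA : PM.Atomic P)
    (a₀ : ℚ) (ha₀ : PM.IsAtom P a₀)
    (hstable : {a : ℚ | PM.IsAtom P a ∧ a.num = a₀.num}.Infinite) :
    ∃ d : ℕ, ∀ k ≥ d, (PM.U P k).Infinite :=
  stmt3_general P a₀ ha₀ hstable
end

section
/- Let {p_n} be a strictly increasing enumeration of the primes and P = ⟨(p_n − 1)/p_n : n ∈ ℕ⟩. Then P is atomic with A(P) = {(p_n − 1)/p_n : n ∈ ℕ}, 0 is not a limit point of P, and ρ_k(P) < ∞ for every k ∈ ℕ. -/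
/-!
Every generator `(p - 1) / p` lies in `[1/2, 1)`, so every nonzero element of `P` is at least `1/2`
and a sum of two nonzero elements is at least `1`, larger than any generator. Hence the generators
are exactly the atoms, and an element with a factorization of length `k` is `< k`, while a
factorization of length `l` forces it to be `≥ l / 2`; so `U_k(P) ⊆ [0, 2k]`.
-/

open Set

namespace PM

section Closure

variable {A : Set ℚ}

lemma eq_zero_or_mem_or_exists_add_of_mem_closure {x : ℚ} (hx : x ∈ AddSubmonoid.closure A) :
    x = 0 ∨ x ∈ A ∨ ∃ y ∈ AddSubmonoid.closure A, ∃ z ∈ AddSubmonoid.closure A,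
      y ≠ 0 ∧ z ≠ 0 ∧ x = y + z := by
  induction hx using AddSubmonoid.closure_induction with
  | mem x hx => exact Or.inr (Or.inl hx)
  | zero => exact Or.inl rfl
  | add y z hy hz ihy ihz =>
    by_cases hy0 : y = 0
    · simpa [hy0] using ihz
    by_cases hz0 : z = 0
    · simpa [hz0] using ihy
    exact Or.inr (Or.inr ⟨y, hy, z, hz, hy0, hz0, rfl⟩)

lemma mem_of_isAtom_closure {a : ℚ} (ha : IsAtom (AddSubmonoid.closure A) a) : a ∈ A := by
  obtain ⟨haP, ha0, hsplit⟩ := ha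
  rcases eq_zero_or_mem_or_exists_add_of_mem_closure haP with h | h | ⟨y, hy, z, hz, hy0, hz0, rfl⟩
  · exact absurd h ha0
  · exact h
  · rcases hsplit y hy z hz rfl with h | h <;> contradiction

lemma atomic_closure_of_subset_isAtom (hA : A ⊆ {a | IsAtom (AddSubmonoid.closure A) a}) :
    Atomic (AddSubmonoid.closure A) :=
  le_antisymm (AddSubmonoid.closure_le.mpr fun _ ha => ha.1) (AddSubmonoid.closure_mono hA)

variable {b : ℚ}

lemma le_of_mem_closure_of_ne_zero (hb : 0 ≤ b) (hA : A ⊆ Ici b) {x : ℚ}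
    (hx : x ∈ AddSubmonoid.closure A) (hx0 : x ≠ 0) : b ≤ x := by
  suffices x = 0 ∨ b ≤ x from this.resolve_left hx0
  clear hx0
  induction hx using AddSubmonoid.closure_induction with
  | mem x hx => exact Or.inr (hA hx)
  | zero => exact Or.inl rfl
  | add y z _ _ ihy ihz =>
    rcases ihy with rfl | hy
    · simpa using ihz
    rcases ihz with rfl | hz
    · simpa using Or.inr hy
    exact Or.inr (by linarith)

lemma isAtom_closure_iff (hb : 0 < b) (hA : A ⊆ Ico b (2 * b)) {a : ℚ} :
    IsAtom (AddSubmonoid.closure A) a ↔ a ∈ A := by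
  refine ⟨mem_of_isAtom_closure, fun ha => ?_⟩
  have hA' : A ⊆ Ici b := fun x hx => (hA hx).1
  refine ⟨AddSubmonoid.subset_closure ha, (hb.trans_le (hA ha).1).ne', ?_⟩
  intro x hx y hy hxy
  by_contra! h
  have hbx := le_of_mem_closure_of_ne_zero hb.le hA' hx h.1
  have hby := le_of_mem_closure_of_ne_zero hb.le hA' hy h.2
  linarith [(hA ha).2]

end Closure

section Lengths

variable {A : Set ℚ} {x : ℚ} {z : Multiset ℚ}

lemma card_mul_le_of_isFactorization {b : ℚ} (hA : A ⊆ Ici b)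
    (hz : IsFactorization (AddSubmonoid.closure A) x z) : (Multiset.card z : ℚ) * b ≤ x := by
  rw [← hz.2, ← nsmul_eq_mul]
  exact Multiset.card_nsmul_le_sum fun a ha => hA (mem_of_isAtom_closure (hz.1 a ha))

lemma le_card_mul_of_isFactorization {c : ℚ} (hA : A ⊆ Iic c)
    (hz : IsFactorization (AddSubmonoid.closure A) x z) : x ≤ (Multiset.card z : ℚ) * c := by
  rw [← hz.2, ← nsmul_eq_mul]
  exact Multiset.sum_le_card_nsmul _ _ fun a ha => hA (mem_of_isAtom_closure (hz.1 a ha))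

lemma U_closure_finite {b c : ℚ} (hb : 0 < b) (hA : A ⊆ Icc b c) (k : ℕ) :
    (U (AddSubmonoid.closure A) k).Finite := by
  refine (Set.finite_Iic ⌊k * c / b⌋₊).subset ?_
  rintro l ⟨x, -, ⟨zk, hzk, rfl⟩, ⟨zl, hzl, rfl⟩⟩
  have hlow := card_mul_le_of_isFactorization (fun a ha => (hA ha).1) hzl
  have hup := le_card_mul_of_isFactorization (fun a ha => (hA ha).2) hzk
  exact Nat.le_floor ((le_div_iff₀ hb).mpr (hlow.trans hup))

end Lengths

end PM

lemma Nat.Prime.sub_one_div_self_mem_Ico {p : ℕ} (hp : p.Prime) :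
    ((p : ℚ) - 1) / p ∈ Ico (1 / 2) 1 := by
  have h2 : (2 : ℚ) ≤ p := by exact_mod_cast hp.two_le
  have hp0 : (0 : ℚ) < p := by linarith
  constructor
  · rw [div_le_div_iff₀ (by norm_num) hp0]; linarith
  · rw [div_lt_iff₀ hp0]; linarith

theorem stmt6 :
    let A : Set ℚ := {q | ∃ p : ℕ, p.Prime ∧ q = ((p : ℚ) - 1) / p}
    let P := AddSubmonoid.closure A
    PM.Atomic P ∧ {a : ℚ | PM.IsAtom P a} = A ∧
      (∃ q : ℚ, 0 < q ∧ ∀ x ∈ P, x ≠ 0 → q ≤ x) ∧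
      ∀ k : ℕ, (PM.U P k).Finite := by
  intro A P
  have hA : A ⊆ Ico (1 / 2) 1 := by
    rintro _ ⟨p, hp, rfl⟩
    exact hp.sub_one_div_self_mem_Ico
  have hatoms : {a : ℚ | PM.IsAtom P a} = A :=
    Set.ext fun _ => PM.isAtom_closure_iff (b := 1 / 2) (by norm_num) (by norm_num; exact hA)
  refine ⟨PM.atomic_closure_of_subset_isAtom hatoms.ge, hatoms, ⟨1 / 2, by norm_num, ?_⟩,
    PM.U_closure_finite (by norm_num) fun a ha => Ico_subset_Icc_self (hA ha)⟩
  exact fun x hx hx0 => PM.le_of_mem_closure_of_ne_zero (by norm_num) (fun a ha => (hA ha).1) hx hx0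
end

section
/- In the Puiseux monoid P = ⟨1/p : p prime⟩, for any two distinct primes p and q, the element 1 ∈ P has factorizations of lengths p and q (namely p copies of 1/p and q copies of 1/q); consequently U_p(P) contains every prime, hence is infinite for each prime p. -/
abbrev primeReciprocals : AddSubmonoid ℚ :=
  AddSubmonoid.closure {q : ℚ | ∃ p : ℕ, p.Prime ∧ q = 1 / p}

namespace primeReciprocals

theorem puiseux : PM.Puiseux primeReciprocals := fun _ hx => by
  induction hx using AddSubmonoid.closure_induction with
  | mem _ hq => obtain ⟨p, -, rfl⟩ := hq; positivity
  | zero => rfl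
  | add _ _ _ _ hx hy => exact add_nonneg hx hy

theorem one_div_mem {p : ℕ} (hp : p.Prime) : 1 / (p : ℚ) ∈ primeReciprocals :=
  AddSubmonoid.subset_closure ⟨p, hp, rfl⟩

theorem den_one_div_prime {p : ℕ} (hp : p.Prime) : (1 / (p : ℚ)).den = p := by
  rw [one_div, Rat.inv_natCast_den_of_pos hp.pos]

theorem one_div_le_or_not_dvd_den {p : ℕ} (hp : p.Prime) {x : ℚ} (hx : x ∈ primeReciprocals) :
    1 / (p : ℚ) ≤ x ∨ ¬ p ∣ x.den := by
  induction hx using AddSubmonoid.closure_induction with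
  | mem _ hq =>
    obtain ⟨q, hq, rfl⟩ := hq
    rcases eq_or_ne q p with rfl | hqp
    · exact .inl le_rfl
    · rw [den_one_div_prime hq, hq.dvd_iff_eq hp.ne_one]
      exact .inr hqp
  | zero => exact .inr (by simpa using hp.ne_one)
  | add x y hxP hyP hx hy =>
    rcases hx with hx | hx
    · exact .inl (le_add_of_le_of_nonneg hx (puiseux y hyP))
    rcases hy with hy | hy
    · exact .inl (le_add_of_nonneg_of_le (puiseux x hxP) hy)
    · exact .inr fun h => (Nat.Prime.dvd_mul hp).not.mpr (not_or.mpr ⟨hx, hy⟩)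
        (h.trans (Rat.add_den_dvd x y))

theorem isAtom_one_div {p : ℕ} (hp : p.Prime) : PM.IsAtom primeReciprocals (1 / p) := by
  refine ⟨one_div_mem hp, by simp [hp.ne_zero], fun x hx y hy hxy => ?_⟩
  have hx0 := puiseux x hx
  have hy0 := puiseux y hy
  rcases one_div_le_or_not_dvd_den hp hx with hpx | hpx
  · exact .inr (by linarith)
  rcases one_div_le_or_not_dvd_den hp hy with hpy | hpy
  · exact .inl (by linarith)
  refine absurd ?_ ((Nat.Prime.dvd_mul hp).not.mpr (not_or.mpr ⟨hpx, hpy⟩))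
  exact (den_one_div_prime hp).symm ▸ hxy ▸ Rat.add_den_dvd x y

theorem isFactorization_one {p : ℕ} (hp : p.Prime) :
    PM.IsFactorization primeReciprocals 1 (Multiset.replicate p (1 / (p : ℚ))) := by
  convert PM.isFactorization_replicate (isAtom_one_div hp) p
  simp [nsmul_eq_mul, hp.ne_zero]

theorem prime_mem_lengths_one {p : ℕ} (hp : p.Prime) : p ∈ PM.Lengths primeReciprocals 1 :=
  ⟨_, isFactorization_one hp, Multiset.card_replicate _ _⟩

end primeReciprocals

theorem stmt8 :
    let P := AddSubmonoid.closure {q : ℚ | ∃ p : ℕ, p.Prime ∧ q = 1 / p}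
    (∀ p : ℕ, p.Prime →
      PM.IsFactorization P 1 (Multiset.replicate p (1 / (p : ℚ))) ∧
      p ∈ PM.Lengths P 1) ∧
    ∀ p : ℕ, p.Prime →
      (∀ r : ℕ, r.Prime → r ∈ PM.U P p) ∧ (PM.U P p).Infinite := by
  intro P
  have hU (p : ℕ) (hp : p.Prime) (r : ℕ) (hr : r.Prime) : r ∈ PM.U P p :=
    ⟨1, (primeReciprocals.isFactorization_one hp).mem,
      primeReciprocals.prime_mem_lengths_one hp, primeReciprocals.prime_mem_lengths_one hr⟩
  exact ⟨fun p hp =>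
    ⟨primeReciprocals.isFactorization_one hp, primeReciprocals.prime_mem_lengths_one hp⟩,
    fun p hp => ⟨hU p hp, Nat.infinite_setOfPred_prime.mono fun r hr => hU p hp r hr⟩⟩
end

section
/- Every monoid homomorphism between two Puiseux monoids P and Q (nontrivial additive submonoids of ℚ≥0) is given by multiplication by a nonnegative rational: if f : P → Q is additive with f(0)=0, then there exists r ∈ ℚ≥0 such that f(x) = r·x for all x ∈ P. -/
theorem Rat.exists_nat_mul_eq_nat_mul {x y : ℚ} (hx : 0 ≤ x) (hy : 0 < y) :
    ∃ a b : ℕ, 0 < a ∧ (a : ℚ) * x = b * y := by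
  refine ⟨y.num.toNat * x.den, x.num.toNat * y.den, ?_, ?_⟩
  · exact Nat.mul_pos (by simpa using Rat.num_pos.mpr hy) x.den_pos
  · have hxnum : ((x.num.toNat : ℤ) : ℚ) = x.num := by
      rw [Int.toNat_of_nonneg (Rat.num_nonneg.mpr hx)]
    have hynum : ((y.num.toNat : ℤ) : ℚ) = y.num := by
      rw [Int.toNat_of_nonneg (Rat.num_nonneg.mpr hy.le)]
    push_cast at hxnum hynum ⊢
    rw [hxnum, hynum]
    linear_combination (y.num : ℚ) * x.mul_den_eq_num - (x.num : ℚ) * y.mul_den_eq_num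

theorem AddMonoidHom.mul_apply_eq_mul_apply_of_nonneg {P : AddSubmonoid ℚ} (f : P →+ ℚ)
    {x y : P} (hx : 0 ≤ (x : ℚ)) (hy : 0 < (y : ℚ)) : (x : ℚ) * f y = y * f x := by
  obtain ⟨a, b, ha, hab⟩ := Rat.exists_nat_mul_eq_nat_mul hx hy
  have hsmul : a • x = b • y := Subtype.ext (by simpa [nsmul_eq_mul] using hab)
  have hf : (a : ℚ) * f x = b * f y := by simpa [nsmul_eq_mul] using congrArg f hsmul
  refine mul_left_cancel₀ (Nat.cast_ne_zero.mpr ha.ne') ?_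
  linear_combination f y * hab - (y : ℚ) * hf

theorem stmt10_general (P Q : AddSubmonoid ℚ) (hP : PM.Puiseux P) (hQ : PM.Puiseux Q)
    (f : P →+ Q) :
    ∃ r : ℚ, 0 ≤ r ∧ ∀ x : P, ((f x : ℚ)) = r * (x : ℚ) := by
  by_cases hzero : ∀ x : P, (x : ℚ) = 0
  · refine ⟨0, le_rfl, fun x => ?_⟩
    simp [show x = 0 from Subtype.ext (hzero x)]
  obtain ⟨p, hp⟩ := not_forall.mp hzero
  have hp_pos : 0 < (p : ℚ) := (hP _ p.2).lt_of_ne' hp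
  refine ⟨f p / p, div_nonneg (hQ _ (f p).2) hp_pos.le, fun x => ?_⟩
  have h := (Q.subtype.comp f).mul_apply_eq_mul_apply_of_nonneg (hP _ x.2) hp_pos
  rw [AddMonoidHom.comp_apply, AddMonoidHom.comp_apply, AddSubmonoid.coe_subtype] at h
  rw [div_mul_eq_mul_div, eq_div_iff hp_pos.ne']
  linear_combination -h

theorem stmt10 (P Q : AddSubmonoid ℚ) (hP : PM.Puiseux P) (hQ : PM.Puiseux Q)
    (hPnt : P ≠ ⊥) (f : P →+ Q) :
    ∃ r : ℚ, 0 ≤ r ∧ ∀ x : P, ((f x : ℚ)) = r * (x : ℚ) :=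
  stmt10_general P Q hP hQ f
end

section
/- In the Puiseux monoid P = ⟨(2/3)^n : n ∈ ℕ⟩, for every k ≥ 2 the element x = k·(2/3) admits factorizations of every length ≥ k; in particular {m ∈ ℕ : m ≥ k} ⊆ L(x). -/
/-!
The generators `(2/3)^(n+1)` are atoms: in a decomposition of `(2/3)^(n+1)` into at least two
generators every summand is smaller, hence of the form `(2/3)^(i+1)` with `i > n` and of 2-adic
valuation `> n + 1`; by the ultrametric inequality so is their sum, which is absurd.
Lengths of `k · (2/3)` then grow one at a time by trading two copies of an atom `(2/3)^(i+1)` for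
three copies of `(2/3)^(i+2)`, which leaves two copies of an atom to trade again.
-/

namespace padicValRat

theorem lt_multiset_sum {p : ℕ} [Fact p.Prime] {v : ℤ} {l : Multiset ℚ} (hl : l ≠ 0)
    (hpos : ∀ a ∈ l, 0 < a) (hv : ∀ a ∈ l, v < padicValRat p a) :
    v < padicValRat p l.sum := by
  induction l using Multiset.induction_on with
  | empty => exact absurd rfl hl
  | cons a t ih =>
    have ha := hv a (Multiset.mem_cons_self a t)
    rw [Multiset.sum_cons]
    rcases eq_or_ne t 0 with rfl | ht
    · simpa using ha
    have ht_nonneg : 0 ≤ t.sum :=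
      Multiset.sum_nonneg fun b hb => (hpos b (Multiset.mem_cons_of_mem hb)).le
    have ht_val := ih ht (fun b hb => hpos b (Multiset.mem_cons_of_mem hb))
      (fun b hb => hv b (Multiset.mem_cons_of_mem hb))
    exact (lt_min ha ht_val).trans_le <| min_le_padicValRat_add
      (add_pos_of_pos_of_nonneg (hpos a (Multiset.mem_cons_self a t)) ht_nonneg).ne'

end padicValRat

namespace PM

theorem IsFactorization.replace {P : AddSubmonoid ℚ} {x : ℚ} {z u v : Multiset ℚ}
    (hz : IsFactorization P x z) (huz : u ≤ z) (hv : ∀ a ∈ v, IsAtom P a)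
    (huv : v.sum = u.sum) : IsFactorization P x (z - u + v) := by
  refine ⟨fun a ha => ?_, ?_⟩
  · rcases Multiset.mem_add.mp ha with ha | ha
    · exact hz.1 a (Multiset.mem_of_le (Multiset.sub_le_self z u) ha)
    · exact hv a ha
  · rw [Multiset.sum_add, huv, ← Multiset.sum_add, tsub_add_cancel_of_le huz, hz.2]

def geometric (r : ℚ) : AddSubmonoid ℚ :=
  AddSubmonoid.closure {q : ℚ | ∃ n : ℕ, q = r ^ (n + 1)}

section Geometric

variable {r : ℚ} {p : ℕ} [Fact p.Prime]

theorem eq_singleton_of_sum_eq_pow (hr0 : 0 < r) (hr1 : r < 1) (hp : 0 < padicValRat p r)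
    {n : ℕ} {l : Multiset ℚ} (hl : ∀ a ∈ l, ∃ i : ℕ, a = r ^ (i + 1))
    (hsum : l.sum = r ^ (n + 1)) : l = {r ^ (n + 1)} := by
  have hpos : ∀ a ∈ l, 0 < a := fun a ha => by
    obtain ⟨i, rfl⟩ := hl a ha
    positivity
  by_cases hbig : ∃ a ∈ l, r ^ (n + 1) ≤ a
  · obtain ⟨a, ha, hle⟩ := hbig
    obtain ⟨t, rfl⟩ := Multiset.exists_cons_of_mem ha
    obtain rfl : t = 0 := by
      by_contra ht
      obtain ⟨b, hb⟩ := Multiset.exists_mem_of_ne_zero ht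
      obtain ⟨t', rfl⟩ := Multiset.exists_cons_of_mem hb
      have hb_pos := hpos b (by simp)
      have ht'_nonneg : 0 ≤ t'.sum := Multiset.sum_nonneg fun c hc => (hpos c (by simp [hc])).le
      simp only [Multiset.sum_cons] at hsum
      linarith
    simpa using hsum
  · push Not at hbig
    have hl0 : l ≠ 0 := by
      rintro rfl
      exact (pow_pos hr0 (n + 1)).ne (by simpa using hsum)
    have hval : padicValRat p (r ^ (n + 1)) < padicValRat p l.sum := by
      refine padicValRat.lt_multiset_sum hl0 hpos fun a ha => ?_
      obtain ⟨i, rfl⟩ := hl a ha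
      have hni : n < i := by
        simpa using (pow_lt_pow_iff_right_of_lt_one₀ hr0 hr1).mp (hbig _ ha)
      simp only [padicValRat.pow]
      gcongr
    exact absurd (hsum ▸ hval) (lt_irrefl _)

theorem isAtom_pow (hr0 : 0 < r) (hr1 : r < 1) (hp : 0 < padicValRat p r) (n : ℕ) :
    IsAtom (geometric r) (r ^ (n + 1)) := by
  refine ⟨AddSubmonoid.subset_closure ⟨n, rfl⟩, (pow_pos hr0 _).ne', fun x hx y hy hxy => ?_⟩
  obtain ⟨lx, hlx, rfl⟩ := AddSubmonoid.exists_multiset_of_mem_closure hx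
  obtain ⟨ly, hly, rfl⟩ := AddSubmonoid.exists_multiset_of_mem_closure hy
  have hl : lx + ly = {r ^ (n + 1)} := by
    refine eq_singleton_of_sum_eq_pow hr0 hr1 hp (fun a ha => ?_) (by rw [Multiset.sum_add, hxy])
    rcases Multiset.mem_add.mp ha with ha | ha
    exacts [hlx a ha, hly a ha]
  have hcard := congrArg Multiset.card hl
  rw [Multiset.card_add, Multiset.card_singleton] at hcard
  rcases Nat.eq_zero_or_pos (Multiset.card lx) with hx0 | hx0
  · left
    simp [Multiset.card_eq_zero.mp hx0]
  · right
    simp [Multiset.card_eq_zero.mp (by omega : Multiset.card ly = 0)]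

end Geometric

theorem padicValRat_two_thirds : padicValRat 2 (2 / 3) = 1 := by
  have h2 : padicValRat 2 ((2 : ℕ) : ℚ) = 1 := padicValRat.self one_lt_two
  have h3 : padicValRat 2 ((3 : ℕ) : ℚ) = 0 := by
    rw [padicValRat.of_nat, padicValNat.eq_zero_of_not_dvd (by norm_num)]
    rfl
  push_cast at h2 h3
  rw [padicValRat.div two_ne_zero three_ne_zero, h2, h3, sub_zero]

theorem isAtom_two_thirds_pow (n : ℕ) : IsAtom (geometric (2 / 3)) ((2 / 3) ^ (n + 1)) :=
  isAtom_pow (p := 2) (by norm_num) (by norm_num) (by rw [padicValRat_two_thirds]; norm_num) n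

theorem exists_factorization_two_thirds {k : ℕ} (hk : 2 ≤ k) (j : ℕ) :
    ∃ z, IsFactorization (geometric (2 / 3)) (k * (2 / 3)) z ∧ Multiset.card z = k + j ∧
      ∃ i : ℕ, Multiset.replicate 2 ((2 / 3 : ℚ) ^ (i + 1)) ≤ z := by
  induction j with
  | zero =>
    refine ⟨Multiset.replicate k ((2 / 3) ^ (0 + 1)), ⟨fun a ha => ?_, ?_⟩, by simp,
      0, Multiset.replicate_mono _ hk⟩
    · rw [Multiset.eq_of_mem_replicate ha]
      exact isAtom_two_thirds_pow 0
    · simp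
  | succ j ih =>
    obtain ⟨z, hz, hcard, i, hi⟩ := ih
    refine ⟨z - Multiset.replicate 2 ((2 / 3) ^ (i + 1)) +
      Multiset.replicate 3 ((2 / 3) ^ (i + 1 + 1)), hz.replace hi (fun a ha => ?_) ?_, ?_,
      i + 1, ?_⟩
    · rw [Multiset.eq_of_mem_replicate ha]
      exact isAtom_two_thirds_pow (i + 1)
    · simp only [Multiset.sum_replicate, nsmul_eq_mul]
      ring
    · rw [Multiset.card_add, Multiset.card_sub hi]
      simp only [Multiset.card_replicate]
      omega
    · exact (Multiset.replicate_mono _ (by norm_num)).trans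
        (Multiset.le_add_left _ _)

end PM

theorem stmt12 :
    let P := AddSubmonoid.closure {q : ℚ | ∃ n : ℕ, q = (2 / 3 : ℚ) ^ (n + 1)}
    ∀ k : ℕ, 2 ≤ k → ∀ m : ℕ, k ≤ m →
      m ∈ PM.Lengths P ((k : ℚ) * (2 / 3)) := by
  intro P k hk m hm
  obtain ⟨j, rfl⟩ := Nat.exists_eq_add_of_le hm
  obtain ⟨z, hz, hcard, -⟩ := PM.exists_factorization_two_thirds hk j
  exact ⟨z, hz, hcard⟩
end

section
/- Let P be a primary Puiseux monoid (generated by positive rationals whose denominators are pairwise distinct primes) such that 0 is not a limit point of P. Then ρ_k(P) < ∞ for every k ∈ ℕ. -/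
/-- `P` is a primary Puiseux monoid. -/
def PM.Primary (P : AddSubmonoid ℚ) : Prop :=
  ∃ A : Set ℚ, (∀ a ∈ A, 0 < a) ∧ AddSubmonoid.closure A = P ∧
    (∀ a ∈ A, (a.den).Prime) ∧
    ∀ a ∈ A, ∀ b ∈ A, a ≠ b → a.den ≠ b.den

/-!
Every atom of a primary Puiseux monoid lies in its generating set, so distinct atoms have distinct
prime denominators. For an atom `a` with `a.den = p`, all other atoms are `p`-integral, so comparing
two factorizations of the same element shows that the multiplicities of `a` in them are congruent
modulo `p`. Hence if one factorization has length `k`, every atom with denominator `> k` occurs in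
any other factorization at least as often. What is left of the other factorization consists of
atoms `≥ q` and sums to at most `k * M`, where `M` bounds the finitely many atoms with
denominator `≤ k`; so its length is at most `k + k * M / q`.
-/

open Multiset

lemma Rat.natCast_dvd_of_padicValuation_intCast_mul_le_one {p : ℕ} [Fact p.Prime] {a : ℚ}
    (ha : p ∣ a.den) {n : ℤ} (h : Rat.padicValuation p (n * a) ≤ 1) : (p : ℤ) ∣ n := by
  by_contra hn
  rw [map_mul, Rat.padicValuation_cast, Int.padicValuation_eq_one_iff.2 hn, one_mul,
    Rat.padicValuation_le_one_iff] at h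
  exact h ha

lemma Multiset.count_nsmul_add_sum_filter_ne {α : Type*} [DecidableEq α] [AddCommMonoid α]
    (s : Multiset α) (a : α) : s.count a • a + (s.filter (· ≠ a)).sum = s.sum := by
  conv_rhs => rw [← filter_add_not (· = a) s]
  rw [sum_add, filter_eq', sum_replicate]

namespace PM

variable {S : Set ℚ} {z z' : Multiset ℚ}

theorem den_dvd_count_sub_count (hprime : ∀ a ∈ S, a.den.Prime) (hinj : S.InjOn Rat.den)
    (hz : ∀ b ∈ z, b ∈ S) (hz' : ∀ b ∈ z', b ∈ S) (hsum : z.sum = z'.sum) {a : ℚ} (ha : a ∈ S) :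
    (a.den : ℤ) ∣ z.count a - z'.count a := by
  have : Fact a.den.Prime := ⟨hprime a ha⟩
  have hrest : ∀ y : Multiset ℚ, (∀ b ∈ y, b ∈ S) →
      (y.filter (· ≠ a)).sum ∈ (Rat.padicValuation a.den).integer := by
    intro y hy
    refine multiset_sum_mem _ fun b hb => ?_
    obtain ⟨hby, hba⟩ := mem_filter.1 hb
    rw [Valuation.mem_integer_iff, Rat.padicValuation_le_one_iff]
    intro hdvd
    exact hba (hinj (hy b hby) ha
      ((Nat.prime_dvd_prime_iff_eq (hprime a ha) (hprime b (hy b hby))).1 hdvd).symm)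
  apply Rat.natCast_dvd_of_padicValuation_intCast_mul_le_one dvd_rfl
  have hdiff : ((z.count a - z'.count a : ℤ) : ℚ) * a =
      (z'.filter (· ≠ a)).sum - (z.filter (· ≠ a)).sum := by
    have h := z.count_nsmul_add_sum_filter_ne a
    have h' := z'.count_nsmul_add_sum_filter_ne a
    simp only [nsmul_eq_mul] at h h'
    push_cast
    linarith
  rw [hdiff]
  exact sub_mem (hrest z' hz') (hrest z hz)

theorem filter_lt_den_le (hprime : ∀ a ∈ S, a.den.Prime) (hinj : S.InjOn Rat.den)
    (hz : ∀ b ∈ z, b ∈ S) (hz' : ∀ b ∈ z', b ∈ S) (hsum : z.sum = z'.sum) {k : ℕ}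
    (hk : card z ≤ k) : z.filter (fun a => k < a.den) ≤ z' := by
  rw [le_iff_count]
  intro a
  rw [count_filter]
  split_ifs with hbig
  · by_cases ha : a ∈ z
    · have hdvd := den_dvd_count_sub_count hprime hinj hz hz' hsum (hz a ha)
      have hcount := count_le_card a z
      by_contra! hlt
      have hden_le := Int.le_of_dvd (by omega) hdvd
      omega
    · simp [count_eq_zero_of_notMem ha]
  · exact Nat.zero_le _

theorem card_mul_le_of_sum_eq (hprime : ∀ a ∈ S, a.den.Prime) (hinj : S.InjOn Rat.den)
    (hz : ∀ b ∈ z, b ∈ S) (hz' : ∀ b ∈ z', b ∈ S) (hsum : z.sum = z'.sum) {k : ℕ}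
    (hk : card z ≤ k) {q M : ℚ} (hq : 0 ≤ q) (hqS : ∀ a ∈ S, q ≤ a) (hM : 0 ≤ M)
    (hMS : ∀ a ∈ S, a.den ≤ k → a ≤ M) :
    (card z' : ℚ) * q ≤ k * (q + M) := by
  set big : ℚ → Prop := fun a => k < a.den
  obtain ⟨r, rfl⟩ : ∃ r, z' = z.filter big + r :=
    ⟨_, (add_tsub_cancel_of_le (filter_lt_den_le hprime hinj hz hz' hsum hk)).symm⟩
  have hsplit := filter_add_not big z
  have hr : r.sum = (z.filter (¬ big ·)).sum := by
    have hzsum := sum_add (z.filter big) (z.filter (¬ big ·))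
    rw [hsplit] at hzsum
    rw [sum_add] at hsum
    linarith
  have hrq : card r • q ≤ r.sum :=
    card_nsmul_le_sum fun b hb => hqS b (hz' b (mem_add.2 (.inr hb)))
  have hsmall : (z.filter (¬ big ·)).sum ≤ card (z.filter (¬ big ·)) • M :=
    sum_le_card_nsmul _ _ fun b hb => by
      obtain ⟨hbz, hb⟩ := mem_filter.1 hb
      exact hMS b (hz b hbz) (not_lt.1 hb)
  have hcard : card (z.filter big) + card (z.filter (¬ big ·)) ≤ k := by
    rw [← card_add, hsplit]
    exact hk
  rw [nsmul_eq_mul] at hrq hsmall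
  rw [card_add]
  have hcard' : (card (z.filter big) : ℚ) + card (z.filter (¬ big ·)) ≤ k := by
    exact_mod_cast hcard
  push_cast
  nlinarith [mul_nonneg (Nat.cast_nonneg (α := ℚ) (card (z.filter big))) hM,
    mul_nonneg (Nat.cast_nonneg (α := ℚ) (card (z.filter (¬ big ·)))) hq]

theorem mem_of_isAtom_of_closure_eq {P : AddSubmonoid ℚ} {A : Set ℚ} (hA : ∀ a ∈ A, 0 < a)
    (hcl : AddSubmonoid.closure A = P) {a : ℚ} (ha : IsAtom P a) : a ∈ A := by
  obtain ⟨haP, ha0, hsplit⟩ := ha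
  rw [← hcl] at haP
  obtain ⟨s, hsA, rfl⟩ := AddSubmonoid.exists_multiset_of_mem_closure haP
  obtain ⟨b, hb⟩ := exists_mem_of_ne_zero (s := s) (by rintro rfl; exact ha0 sum_zero)
  obtain ⟨t, rfl⟩ := exists_cons_of_mem hb
  have hbA := hsA b hb
  have htP : t.sum ∈ P := hcl ▸ multiset_sum_mem _ fun c hc =>
    AddSubmonoid.subset_closure (hsA c (mem_cons_of_mem hc))
  rcases hsplit b (hcl ▸ AddSubmonoid.subset_closure hbA) t.sum htP (sum_cons b t) with hb0 | ht0
  · exact absurd hb0 (hA b hbA).ne'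
  · rwa [sum_cons, ht0, add_zero]

theorem U_finite_of_den_injOn {P : AddSubmonoid ℚ} {q : ℚ} (hq : 0 < q)
    (hqP : ∀ a, IsAtom P a → q ≤ a) (hprime : ∀ a, IsAtom P a → a.den.Prime)
    (hinj : {a | IsAtom P a}.InjOn Rat.den) (k : ℕ) : (U P k).Finite := by
  have hsmall : {a | IsAtom P a ∧ a.den ≤ k}.Finite :=
    .of_finite_image ((Set.finite_Iic k).subset (by rintro _ ⟨a, ha, rfl⟩; exact ha.2))
      (hinj.mono fun a ha => ha.1)
  obtain ⟨B, hB⟩ := hsmall.bddAbove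
  refine (Set.finite_Iic ⌈k * (q + max B 0) / q⌉₊).subset ?_
  rintro _ ⟨x, -, ⟨z, ⟨hz, rfl⟩, rfl⟩, ⟨z', ⟨hz', hsum⟩, rfl⟩⟩
  have hcard := card_mul_le_of_sum_eq hprime hinj hz hz' hsum.symm le_rfl hq.le hqP
    (le_max_right B 0) fun a ha hak => (hB ⟨ha, hak⟩).trans (le_max_left B 0)
  rw [← le_div_iff₀ hq] at hcard
  exact_mod_cast hcard.trans (Nat.le_ceil _)

end PM

theorem stmt13 (P : AddSubmonoid ℚ) (hprim : PM.Primary P)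
    (h0 : ∃ q : ℚ, 0 < q ∧ ∀ x ∈ P, x ≠ 0 → q ≤ x) :
    ∀ k : ℕ, (PM.U P k).Finite := by
  obtain ⟨A, hApos, hAcl, hAprime, hAinj⟩ := hprim
  obtain ⟨q, hq, hqP⟩ := h0
  have hatom : ∀ a, PM.IsAtom P a → a ∈ A := fun a => PM.mem_of_isAtom_of_closure_eq hApos hAcl
  refine PM.U_finite_of_den_injOn hq (fun a ha => hqP a ha.1 ha.2.1)
    (fun a ha => hAprime a (hatom a ha)) fun a ha b hb hab => ?_
  by_contra hne
  exact hAinj a (hatom a ha) b (hatom b hb) hne hab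
end
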